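/- Let Γ act on a compact Hausdorff space X and suppose the action is (topologically) amenable, i.e., there is a net of continuous maps μ_i : X → Prob(Γ) with sup_{x∈X} ‖ g·μ_i(x) − μ_i(g x) ‖_1 → 0 for all g ∈ Γ. Then for every x ∈ X, the stabilizer subgroup Γ_x = { g ∈ Γ : g x = x } is amenable. -/

import Mathlib

/-! A point stabilizer `H = Γ_x` of an amenable action inherits a Reiter condition: evaluating the
approximately invariant maps `μ_i : X → Prob(Γ)` at the fixed point `x` gives probability densities
`ν_i = μ_i(x)` on `Γ` with `‖h · ν_i − ν_i‖₁ → 0` for every `h ∈ H`. Pulling bounded functions on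
`H` back to `Γ` along an `H`-equivariant retraction `Γ → H` (choose coset representatives),
the functionals `f ↦ ∑_g ν_i(g) f(π g)` are asymptotically invariant states on `ℓ^∞(H)`, and
an ultrafilter limit of them is an invariant mean. -/

/-- The action of `Γ` on `X` is topologically amenable: approximately invariant continuous
maps `X → Prob(Γ)`, uniformly over `X`. -/
def AmenableAction (Γ : Type*) [Group Γ] (X : Type*) [TopologicalSpace X]
    [MulAction Γ X] : Prop :=
  ∀ ε > (0 : ℝ), ∀ E : Finset Γ,
    ∃ μ : X → Γ → ℝ,
      (∀ x g, 0 ≤ μ x g) ∧ (∀ x, ∑' g : Γ, μ x g = 1) ∧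
      (∀ g : Γ, Continuous fun x => μ x g) ∧
      ∀ g ∈ E, ∀ x : X, ∑' h : Γ, |μ x (g⁻¹ * h) - μ (g • x) h| < ε

/-- `H` is amenable: `ℓ^∞(H)` admits a left-invariant mean. -/
def AmenableGroup (H : Type*) [Group H] : Prop :=
  ∃ m : lp (fun _ : H => ℝ) ⊤ →ₗ[ℝ] ℝ,
    m 1 = 1 ∧ (∀ f : lp (fun _ : H => ℝ) ⊤, (∀ k, 0 ≤ f k) → 0 ≤ m f) ∧
    ∀ (h : H) (f f' : lp (fun _ : H => ℝ) ⊤),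
      (∀ k, f' k = f (h⁻¹ * k)) → m f' = m f

open Filter Topology

section Pairing

variable {Y Z : Type*}

lemma norm_mul_lp_apply_le (ν : Y → ℝ) (φ : Y → Z) (f : lp (fun _ : Z => ℝ) ⊤) (y : Y) :
    ‖ν y * f (φ y)‖ ≤ |ν y| * ‖f‖ := by
  rw [norm_mul, Real.norm_eq_abs]
  exact mul_le_mul_of_nonneg_left (lp.norm_apply_le_norm ENNReal.top_ne_zero f _) (abs_nonneg _)

lemma summable_mul_lp_apply {ν : Y → ℝ} (hν : Summable ν) (φ : Y → Z)
    (f : lp (fun _ : Z => ℝ) ⊤) : Summable fun y => ν y * f (φ y) :=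
  ((summable_abs_iff.mpr hν).mul_right ‖f‖).of_norm_bounded (norm_mul_lp_apply_le ν φ f)

noncomputable def lpPairing (ν : Y → ℝ) (hν : Summable ν) (φ : Y → Z) :
    lp (fun _ : Z => ℝ) ⊤ →ₗ[ℝ] ℝ where
  toFun f := ∑' y, ν y * f (φ y)
  map_add' f g := by
    simp only [lp.coeFn_add, Pi.add_apply, mul_add]
    exact (summable_mul_lp_apply hν φ f).tsum_add (summable_mul_lp_apply hν φ g)
  map_smul' r f := by
    simp only [lp.coeFn_smul, Pi.smul_apply, smul_eq_mul, RingHom.id_apply, mul_left_comm _ r]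
    exact tsum_mul_left

variable {ν : Y → ℝ} {hν : Summable ν} {φ : Y → Z}

lemma lpPairing_apply (f : lp (fun _ : Z => ℝ) ⊤) :
    lpPairing ν hν φ f = ∑' y, ν y * f (φ y) := rfl

lemma abs_lpPairing_le (f : lp (fun _ : Z => ℝ) ⊤) :
    |lpPairing ν hν φ f| ≤ (∑' y, |ν y|) * ‖f‖ := by
  rw [← Real.norm_eq_abs]
  exact tsum_of_norm_bounded ((summable_abs_iff.mpr hν).hasSum.mul_right ‖f‖)
    (norm_mul_lp_apply_le ν φ f)

lemma lpPairing_sub {ν' : Y → ℝ} (hν' : Summable ν') (f : lp (fun _ : Z => ℝ) ⊤) :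
    lpPairing ν hν φ f - lpPairing ν' hν' φ f = lpPairing (ν - ν') (hν.sub hν') φ f := by
  simp only [lpPairing_apply, Pi.sub_apply, sub_mul]
  exact ((summable_mul_lp_apply hν φ f).tsum_sub (summable_mul_lp_apply hν' φ f)).symm

lemma lpPairing_translate {H : Type*} [Group H] [MulAction H Y] {π : Y → H}
    (hπ : ∀ (h : H) (y : Y), π (h • y) = h * π y) (h : H) (hνh : Summable fun y => ν (h • y))
    {f f' : lp (fun _ : H => ℝ) ⊤} (hf' : ∀ k, f' k = f (h⁻¹ * k)) :
    lpPairing ν hν π f' = lpPairing (fun y => ν (h • y)) hνh π f := by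
  simp only [lpPairing_apply, hf', ← hπ]
  rw [← (MulAction.toPerm h).tsum_eq]
  simp [MulAction.toPerm_apply]

end Pairing

lemma exists_linearMap_tendsto_of_bounded {I M : Type*} [AddCommGroup M] [Module ℝ M]
    (U : Ultrafilter I) (S : I → M →ₗ[ℝ] ℝ) (hS : ∀ f, ∃ C, ∀ i, |S i f| ≤ C) :
    ∃ L : M →ₗ[ℝ] ℝ, ∀ f, Tendsto (fun i => S i f) U (𝓝 (L f)) := by
  have hlim : ∀ f, ∃ a, Tendsto (fun i => S i f) U (𝓝 a) := fun f => by
    obtain ⟨C, hC⟩ := hS f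
    obtain ⟨a, -, ha⟩ := isCompact_Icc.ultrafilter_le_nhds (U.map fun i => S i f)
      (le_principal_iff.mpr <| Ultrafilter.mem_map.mpr <| univ_mem' fun i => abs_le.mp (hC i))
    exact ⟨a, ha⟩
  choose L hL using hlim
  refine ⟨{ toFun := L, map_add' := fun f g => ?_, map_smul' := fun r f => ?_ }, hL⟩
  · exact tendsto_nhds_unique (hL (f + g)) (by simpa using (hL f).add (hL g))
  · exact tendsto_nhds_unique (hL (r • f)) (by simpa using (hL f).const_mul r)

def ReiterCondition (H Y : Type*) [Group H] [MulAction H Y] : Prop :=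
  ∀ ε > (0 : ℝ), ∀ E : Finset H, ∃ ν : Y → ℝ,
    (∀ y, 0 ≤ ν y) ∧ ∑' y, ν y = 1 ∧ ∀ h ∈ E, ∑' y, |ν (h • y) - ν y| < ε

theorem ReiterCondition.amenableGroup {H Y : Type*} [Group H] [MulAction H Y]
    (hR : ReiterCondition H Y) (π : Y → H) (hπ : ∀ (h : H) (y : Y), π (h • y) = h * π y) :
    AmenableGroup H := by
  classical
  choose ν hν0 hν1 hνinv using
    fun i : Finset H × ℕ => hR (1 / (i.2 + 1)) Nat.one_div_pos_of_nat i.1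
  have hνs : ∀ i, Summable (ν i) := fun i => by
    by_contra h
    simpa [tsum_eq_zero_of_not_summable h] using hν1 i
  have hνabs : ∀ i, ∑' y, |ν i y| = 1 := fun i => by
    simpa only [abs_of_nonneg (hν0 i _)] using hν1 i
  let S i := lpPairing (ν i) (hνs i) π
  let U := Ultrafilter.of (atTop : Filter (Finset H × ℕ))
  obtain ⟨m, hm⟩ := exists_linearMap_tendsto_of_bounded U S fun f =>
    ⟨‖f‖, fun i => by simpa [hνabs] using abs_lpPairing_le (hν := hνs i) (φ := π) f⟩
  refine ⟨m, ?_, fun f hf => ?_, fun h f f' hf' => ?_⟩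
  · refine tendsto_nhds_unique (hm 1) (tendsto_const_nhds.congr fun i => ?_)
    simpa [S, lpPairing_apply, lp.infty_coeFn_one] using (hν1 i).symm
  · exact ge_of_tendsto' (hm f) fun i => tsum_nonneg fun y => mul_nonneg (hν0 i y) (hf _)
  · have hsmall : ∀ᶠ i in (U : Filter _), ‖S i f' - S i f‖ ≤ 1 / (i.2 + 1) * ‖f‖ := by
      filter_upwards [Ultrafilter.of_le _ (eventually_ge_atTop ({h}, 0))] with i hi
      have hνh : Summable fun y => ν i (h • y) := (MulAction.toPerm h).summable_iff.mpr (hνs i)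
      rw [Real.norm_eq_abs, lpPairing_translate hπ h hνh hf', lpPairing_sub]
      refine (abs_lpPairing_le f).trans (mul_le_mul_of_nonneg_right ?_ (norm_nonneg f))
      exact (hνinv i h (hi.1 (Finset.mem_singleton_self h))).le
    have hε : Tendsto (fun i : Finset H × ℕ => 1 / ((i.2 : ℝ) + 1) * ‖f‖) U (𝓝 0) := by
      simpa using ((tendsto_one_div_add_atTop_nhds_zero_nat.comp tendsto_snd).mono_left
        ((Ultrafilter.of_le _).trans prod_atTop_atTop_eq.ge)).mul_const ‖f‖
    exact sub_eq_zero.mp <| tendsto_nhds_unique ((hm f').sub (hm f)) (squeeze_zero_norm' hsmall hε)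

lemma Subgroup.exists_equivariant_retraction {G : Type*} [Group G] (H : Subgroup G) :
    ∃ π : G → H, ∀ (h : H) (g : G), π (h • g) = h * π g := by
  let r g := (Quotient.mk'' g : Quotient (QuotientGroup.rightRel H)).out
  have hr g : g * (r g)⁻¹ ∈ H := QuotientGroup.rightRel_apply.mp (Quotient.mk_out' g)
  have hr_mul (h : H) g : r (h * g) = r g := by
    simp only [r]
    congr 1
    refine Quotient.sound' (QuotientGroup.rightRel_apply.mpr ?_)
    simp
  exact ⟨fun g => ⟨g * (r g)⁻¹, hr g⟩, fun h g =>
    Subtype.ext <| by simp [Subgroup.smul_def, hr_mul, mul_assoc]⟩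

theorem AmenableAction.reiterCondition_stabilizer {Γ X : Type*} [Group Γ] [TopologicalSpace X]
    [MulAction Γ X] (ha : AmenableAction Γ X) (x : X) :
    ReiterCondition (MulAction.stabilizer Γ x) Γ := by
  classical
  intro ε hε E
  obtain ⟨μ, hμ0, hμ1, -, hμinv⟩ :=
    ha ε hε (E.image fun h : MulAction.stabilizer Γ x => (h : Γ)⁻¹)
  refine ⟨μ x, hμ0 x, hμ1 x, fun h hh => ?_⟩
  have hfix : (h : Γ)⁻¹ • x = x := inv_smul_eq_iff.mpr h.2.symm
  simpa [hfix, Subgroup.smul_def] using hμinv _ (Finset.mem_image_of_mem _ hh) x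

theorem stmt9_general {Γ : Type*} [Group Γ] (X : Type*) [TopologicalSpace X] [MulAction Γ X]
    (ha : AmenableAction Γ X) (x : X) :
    AmenableGroup ↥(MulAction.stabilizer Γ x) := by
  obtain ⟨π, hπ⟩ := (MulAction.stabilizer Γ x).exists_equivariant_retraction
  exact (ha.reiterCondition_stabilizer x).amenableGroup π hπ

/-- if `Γ` acts amenably on a compact Hausdorff space `X`, then every point
stabilizer `Γ_x` is an amenable group. -/
theorem stmt9 {Γ : Type*} [Group Γ] (X : Type*) [TopologicalSpace X] [CompactSpace X]
    [T2Space X] [MulAction Γ X] (hcont : ∀ g : Γ, Continuous fun x : X => g • x)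
    (ha : AmenableAction Γ X) (x : X) :
    AmenableGroup ↥(MulAction.stabilizer Γ x) :=
  stmt9_general X ha x
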